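/- Every vertex of Q_{n,k} (n ≥ 3) lies on a cycle of every even length from 4 to 2^n; and if k is even, every vertex also lies on a cycle of every odd length from k + 1 to 2^n − 1. -/

import Mathlib

open SimpleGraph

/-- The `n`-dimensional hypercube: vertices are binary strings of length `n`
(indexed so that bit `i+1` of the paper is index `i`), adjacent iff they
differ in exactly one bit. -/
def hypercube (n : ℕ) : SimpleGraph (Fin n → Bool) where
  Adj u v := ∃! i, u i ≠ v i
  symm.symm := by
    rintro u v ⟨i, hi, hu⟩
    exact ⟨i, hi.symm, fun j hj => hu j hj.symm⟩
  loopless.irrefl := by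
    rintro u ⟨i, hi, -⟩
    exact hi rfl

/-- Skip relation: `u` and `v` differ exactly in the last `k` bits
(indices `0, …, k-1`). -/
def skipRel (n k : ℕ) (u v : Fin n → Bool) : Prop :=
  u ≠ v ∧ ∀ i : Fin n, (i.val < k → u i ≠ v i) ∧ (k ≤ i.val → u i = v i)

/-- The enhanced hypercube `Q_{n,k}`: hypercube edges together with skip edges. -/
def enhanced (n k : ℕ) : SimpleGraph (Fin n → Bool) where
  Adj u v := (hypercube n).Adj u v ∨ skipRel n k u v
  symm.symm := by
    rintro u v (h | ⟨hne, h⟩)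
    · exact Or.inl ((hypercube n).adj_symm h)
    · exact Or.inr ⟨hne.symm, fun i =>
        ⟨fun hi => ((h i).1 hi).symm, fun hi => ((h i).2 hi).symm⟩⟩
  loopless.irrefl := by
    rintro u (h | ⟨hne, -⟩)
    · exact (hypercube n).loopless.irrefl u h
    · exact hne rfl

/-- The folded hypercube `FQ_n`: hypercube edges together with complementary edges. -/
def folded (n : ℕ) : SimpleGraph (Fin n → Bool) where
  Adj u v := (hypercube n).Adj u v ∨ (u ≠ v ∧ ∀ i, u i ≠ v i)
  symm.symm := by
    rintro u v (h | ⟨hne, h⟩)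
    · exact Or.inl ((hypercube n).adj_symm h)
    · exact Or.inr ⟨hne.symm, fun i => (h i).symm⟩
  loopless.irrefl := by
    rintro u (h | ⟨hne, -⟩)
    · exact (hypercube n).loopless.irrefl u h
    · exact hne rfl

/-- The Cartesian product `K₂ × G`: two copies of `G` joined by crossing edges. -/
def K2Prod {V : Type*} (G : SimpleGraph V) : SimpleGraph (Bool × V) :=
  (completeGraph Bool) □ G

/-- The edge `e` lies on a cycle of length `l` in `G`. -/
def EdgeOnCycle {V : Type*} (G : SimpleGraph V) (e : Sym2 V) (l : ℕ) : Prop :=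
  ∃ (v : V) (c : G.Walk v v), c.IsCycle ∧ c.length = l ∧ e ∈ c.edges

/-!
The hypercube `Q_n` is bipanconnected: for `u ≠ v` at Hamming distance `d` it has a `u`–`v`
path of every length `m` with `d ≤ m < 2 ^ n` and `m ≡ d (mod 2)`. This goes by induction on
`n`, splitting `Q_{n+1}` into two layers along a coordinate where `u` and `v` agree, or, if
there is none, along the last one, and routing the path through both layers.

An edge `uv` of `Q_{n,k}` together with a `v`–`u` path of length `l - 1` in `Q_n` closes a cycle
of length `l` through `u`. Taking for `v` the neighbour of `u` across bit `0` gives the even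
cycles; taking the skip neighbour of `u`, at distance `k`, gives the odd ones when `k` is even.
-/

namespace SimpleGraph.Walk

variable {V : Type*} {G G' : SimpleGraph V}

theorem IsPath.append_cons {u v w x : V} {p : G.Walk u v} {q : G.Walk w x} (hp : p.IsPath)
    (hq : q.IsPath) (h : G.Adj v w) (hpq : p.support.Disjoint q.support) :
    (p.append (cons h q)).IsPath := by
  rw [isPath_def, support_append, support_cons, List.tail_cons, List.nodup_append']
  exact ⟨hp.support_nodup, hq.support_nodup, hpq⟩

theorem IsPath.exists_isCycle_cons (hle : G ≤ G') {u v : V} (h : G'.Adj u v) {p : G.Walk v u}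
    (hp : p.IsPath) (hlen : p.length ≠ 1) :
    ∃ c : G'.Walk u u, c.IsCycle ∧ c.length = p.length + 1 := by
  refine ⟨cons h (p.mapLe hle), (cons_isCycle_iff _ _).mpr ⟨hp.mapLe hle, ?_⟩, by
    rw [length_cons, length_mapLe]⟩
  rw [edges_mapLe_eq_edges, Sym2.eq_swap]
  intro he
  exact hlen (by rw [hp.eq_adj_toWalk_of_mem_edges he, Adj.length_toWalk])

end SimpleGraph.Walk

namespace Hypercube

open Walk

variable {n : ℕ}

theorem adj_iff_hammingDist_eq_one {u v : Fin n → Bool} :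
    (hypercube n).Adj u v ↔ hammingDist u v = 1 := by
  rw [hammingDist, Finset.card_eq_one]
  constructor
  · rintro ⟨i, hi, huniq⟩
    exact ⟨i, Finset.eq_singleton_iff_unique_mem.mpr
      ⟨by simpa using hi, fun j hj => huniq j (by simpa using hj)⟩⟩
  · rintro ⟨i, hs⟩
    obtain ⟨hi, huniq⟩ := Finset.eq_singleton_iff_unique_mem.mp hs
    exact ⟨i, by simpa using hi, fun j hj => huniq j (by simpa using hj)⟩

theorem hammingDist_insertNth (j : Fin (n + 1)) (b b' : Bool) (u v : Fin n → Bool) :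
    hammingDist (Fin.insertNth j b u : Fin (n + 1) → Bool) (Fin.insertNth j b' v) =
      hammingDist u v + if b = b' then 0 else 1 := by
  simp only [hammingDist, Finset.card_filter, Fin.sum_univ_succAbove _ j, Fin.insertNth_apply_same,
    Fin.insertNth_apply_succAbove, ite_not]
  omega

/-- `insertNthHom j b` embeds `Q_n` as the layer of `Q_{n+1}` whose `j`-th bit is `b`. -/
def insertNthHom (j : Fin (n + 1)) (b : Bool) : hypercube n →g hypercube (n + 1) where
  toFun u := Fin.insertNth j b u
  map_rel' {u v} h := by
    rw [adj_iff_hammingDist_eq_one] at h ⊢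
    simpa [hammingDist_insertNth] using h

@[simp]
theorem insertNthHom_apply (j : Fin (n + 1)) (b : Bool) (u : Fin n → Bool) :
    insertNthHom j b u = Fin.insertNth j b u := rfl

theorem insertNthHom_inj {j : Fin (n + 1)} {b b' : Bool} {u v : Fin n → Bool} :
    insertNthHom j b u = insertNthHom j b' v ↔ b = b' ∧ u = v :=
  Fin.insertNth_inj (α := fun _ => Bool)

theorem insertNthHom_injective (j : Fin (n + 1)) (b : Bool) :
    Function.Injective (insertNthHom j b) :=
  fun _ _ h => (insertNthHom_inj.mp h).2

theorem adj_insertNthHom_of_ne (j : Fin (n + 1)) {b b' : Bool} (hb : b ≠ b')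
    (u : Fin n → Bool) :
    (hypercube (n + 1)).Adj (insertNthHom j b u) (insertNthHom j b' u) := by
  simp [adj_iff_hammingDist_eq_one, hammingDist_insertNth, hb]

def crossWalk (j : Fin (n + 1)) {b b' : Bool} (hb : b ≠ b') {u w v : Fin n → Bool}
    (p : (hypercube n).Walk u w) (q : (hypercube n).Walk w v) :
    (hypercube (n + 1)).Walk (insertNthHom j b u) (insertNthHom j b' v) :=
  (p.map (insertNthHom j b)).append
    (cons (adj_insertNthHom_of_ne j hb w) (q.map (insertNthHom j b')))

section crossWalk

variable (j : Fin (n + 1)) {b b' : Bool} (hb : b ≠ b') {u w v : Fin n → Bool}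
  (p : (hypercube n).Walk u w) (q : (hypercube n).Walk w v)

theorem length_crossWalk : (crossWalk j hb p q).length = p.length + q.length + 1 := by
  rw [crossWalk, length_append, length_cons, length_map, length_map]
  omega

theorem isPath_crossWalk (hp : p.IsPath) (hq : q.IsPath) : (crossWalk j hb p q).IsPath := by
  refine IsPath.append_cons (hp.map (insertNthHom_injective j b))
    (hq.map (insertNthHom_injective j b')) _ ?_
  simp only [Walk.support_map, List.disjoint_left, List.mem_map]
  rintro _ ⟨x, -, rfl⟩ ⟨y, -, hyx⟩
  exact hb.symm (insertNthHom_inj.mp hyx).1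

theorem mem_support_crossWalk_of_insertNthHom {z : Fin n → Bool}
    (hz : insertNthHom j b' z ∈ (crossWalk j hb p q).support) :
    z ∈ q.support := by
  rw [crossWalk, mem_support_append_iff, support_cons, List.mem_cons, Walk.support_map,
    Walk.support_map, List.mem_map, List.mem_map] at hz
  rcases hz with ⟨x, -, hx⟩ | hz | ⟨x, hx, hxz⟩
  · exact absurd (insertNthHom_inj.mp hx).1 hb
  · exact absurd (insertNthHom_inj.mp hz).1 hb.symm
  · exact (insertNthHom_inj.mp hxz).2 ▸ hx

end crossWalk

def flipBelow (j : ℕ) (u : Fin n → Bool) : Fin n → Bool :=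
  fun i => if (i : ℕ) < j then !u i else u i

theorem hammingDist_flipBelow_flipBelow (u : Fin n → Bool) {i j : ℕ} (hij : i ≤ j)
    (hjn : j ≤ n) :
    hammingDist (flipBelow i u) (flipBelow j u) = j - i := by
  rw [hammingDist, ← Finset.card_map Fin.valEmbedding, ← Nat.card_Ico]
  congr 1
  ext x
  simp only [Finset.mem_map, Finset.mem_filter, Finset.mem_univ, true_and, Fin.valEmbedding_apply,
    Finset.mem_Ico]
  constructor
  · rintro ⟨y, hy, rfl⟩
    simp only [flipBelow] at hy
    split_ifs at hy <;> simp_all; omega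
  · rintro ⟨hix, hxj⟩
    exact ⟨⟨x, by omega⟩, by simp [flipBelow, show ¬x < i by omega, hxj], rfl⟩

theorem flipBelow_zero (u : Fin n → Bool) : flipBelow 0 u = u := by
  funext i
  simp [flipBelow]

theorem hammingDist_flipBelow (u : Fin n → Bool) {j : ℕ} (hjn : j ≤ n) :
    hammingDist u (flipBelow j u) = j := by
  simpa [flipBelow_zero] using hammingDist_flipBelow_flipBelow u (Nat.zero_le j) hjn

/-- Bipanconnectedness of `Q_n`: the Hamming distance is the graph distance of `Q_n`. -/
def Bipanconnected (n : ℕ) : Prop :=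
  ∀ ⦃u v : Fin n → Bool⦄, u ≠ v → ∀ m, hammingDist u v ≤ m → m < 2 ^ n →
    m % 2 = hammingDist u v % 2 → ∃ p : (hypercube n).Walk u v, p.IsPath ∧ p.length = m

theorem Bipanconnected.exists_isPath_insertNthHom_same (ih : Bipanconnected n) (j : Fin (n + 1))
    (c : Bool) {u v : Fin n → Bool} (huv : u ≠ v) {m : ℕ} (hd : hammingDist u v ≤ m)
    (hm : m < 2 ^ (n + 1)) (hpar : m % 2 = hammingDist u v % 2) :
    ∃ p : (hypercube (n + 1)).Walk (insertNthHom j c u) (insertNthHom j c v),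
      p.IsPath ∧ p.length = m := by
  have hdn : hammingDist u v ≤ n := by simpa using hammingDist_le_card_fintype (x := u) (y := v)
  have hd0 : 0 < hammingDist u v := hammingDist_pos.mpr huv
  have hn : n < 2 ^ n := Nat.lt_two_pow_self
  have hpow : 2 ^ (n + 1) = 2 * 2 ^ n := pow_succ' 2 n
  have heven : 2 ^ n % 2 = 0 := Nat.two_pow_mod_two_eq_zero.mpr (by omega)
  rcases lt_or_ge m (2 ^ n) with hm' | hm'
  · obtain ⟨p, hp, rfl⟩ := ih huv m hd hm' hpar
    exact ⟨p.map _, hp.map (insertNthHom_injective j c), length_map _ _⟩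
  -- Take a longest path of the right parity inside layer `c` and detour its first edge
  -- through layer `!c`.
  set m₀ := 2 ^ n - 2 + hammingDist u v % 2
  obtain ⟨p₀, hp₀, hl₀⟩ := ih huv m₀ (by omega) (by omega) (by omega)
  cases p₀ with
  | nil => exact absurd rfl huv
  | cons hux q =>
    rw [cons_isPath_iff] at hp₀
    rw [length_cons] at hl₀
    have hux' := adj_iff_hammingDist_eq_one.mp hux
    obtain ⟨p₁, hp₁, hl₁⟩ := ih hux.ne (m - m₀ - 1) (by omega) (by omega) (by omega)
    have hc : (!c) ≠ c := Bool.not_ne_self c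
    refine ⟨cons (adj_insertNthHom_of_ne j hc.symm u) (crossWalk j hc p₁ q), ?_, ?_⟩
    · exact (cons_isPath_iff _ _).mpr ⟨isPath_crossWalk j hc p₁ q hp₁ hp₀.1,
        fun h => hp₀.2 (mem_support_crossWalk_of_insertNthHom j hc p₁ q h)⟩
    · rw [length_cons, length_crossWalk, hl₁]
      omega

theorem Bipanconnected.exists_isPath_insertNthHom_flipBelow (ih : Bipanconnected n)
    (j : Fin (n + 1)) {c c' : Bool} (hc : c ≠ c') (hn : 1 ≤ n) (u : Fin n → Bool) {m : ℕ}
    (hd : n + 1 ≤ m) (hm : m < 2 ^ (n + 1)) (hpar : m % 2 = (n + 1) % 2) :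
    ∃ p : (hypercube (n + 1)).Walk (insertNthHom j c u) (insertNthHom j c' (flipBelow n u)),
      p.IsPath ∧ p.length = m := by
  have huv : hammingDist u (flipBelow n u) = n := hammingDist_flipBelow u le_rfl
  have huv' : u ≠ flipBelow n u := hammingDist_pos.mp (by omega)
  have hn' : n < 2 ^ n := Nat.lt_two_pow_self
  have hpow : 2 ^ (n + 1) = 2 * 2 ^ n := pow_succ' 2 n
  have heven : 2 ^ n % 2 = 0 := Nat.two_pow_mod_two_eq_zero.mpr (by omega)
  rcases le_or_gt m (2 ^ n) with hm' | hm'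
  · obtain ⟨p, hp, hl⟩ := ih huv' (m - 1) (by omega) (by omega) (by omega)
    refine ⟨crossWalk j hc p nil, isPath_crossWalk j hc p nil hp .nil, ?_⟩
    rw [length_crossWalk, hl, length_nil]
    omega
  obtain rfl | hn2 : n = 1 ∨ 2 ≤ n := by omega
  · norm_num at hm hm'
    omega
  -- Go from `u` to its neighbour `w` towards the antipode in layer `c`, then on to the antipode
  -- in layer `c'`, with an odd number `a` of steps in layer `c`.
  set w := flipBelow 1 u
  have huw : hammingDist u w = 1 := hammingDist_flipBelow u hn
  have hwv : hammingDist w (flipBelow n u) = n - 1 :=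
    hammingDist_flipBelow_flipBelow u hn le_rfl
  set a := m - 2 ^ n + (m - 2 ^ n + 1) % 2
  obtain ⟨p₁, hp₁, hl₁⟩ := ih (hammingDist_pos.mp (by omega) : u ≠ w) a (by omega) (by omega)
    (by omega)
  obtain ⟨p₂, hp₂, hl₂⟩ := ih (hammingDist_pos.mp (by omega) : w ≠ flipBelow n u) (m - 1 - a)
    (by omega) (by omega) (by omega)
  refine ⟨crossWalk j hc p₁ p₂, isPath_crossWalk j hc p₁ p₂ hp₁ hp₂, ?_⟩
  rw [length_crossWalk, hl₁, hl₂]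
  omega

theorem insertNthHom_removeNth (j : Fin (n + 1)) (u : Fin (n + 1) → Bool) :
    insertNthHom j (u j) (j.removeNth u) = u :=
  Fin.insertNth_self_removeNth j u

theorem insertNthHom_last_flipBelow (u : Fin (n + 1) → Bool) :
    insertNthHom (Fin.last n) (!u (Fin.last n)) (flipBelow n ((Fin.last n).removeNth u)) =
      flipBelow (n + 1) u := by
  funext i
  induction i using Fin.lastCases with
  | last => simp [flipBelow]
  | cast i => simp [flipBelow, Fin.insertNth_last', Fin.init]

theorem flipBelow_eq_of_forall_ne {u v : Fin n → Bool} (h : ∀ i, u i ≠ v i) :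
    flipBelow n u = v := by
  funext i
  simpa [flipBelow] using Bool.not_eq_iff.mpr (h i)

theorem bipanconnected (n : ℕ) : Bipanconnected n := by
  induction n with
  | zero => exact fun u v huv => absurd (Subsingleton.elim u v) huv
  | succ n ih =>
    intro u v huv m hd hm hpar
    have hdn : hammingDist u v ≤ n + 1 := by
      simpa using hammingDist_le_card_fintype (x := u) (y := v)
    have hd0 : 0 < hammingDist u v := hammingDist_pos.mpr huv
    rcases Nat.eq_zero_or_pos n with rfl | hn
    · obtain rfl : m = 1 := by norm_num at hm; omega
      have hadj := adj_iff_hammingDist_eq_one.mpr (show hammingDist u v = 1 by omega)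
      exact ⟨hadj.toWalk, hadj.isPath_toWalk, hadj.length_toWalk⟩
    by_cases hagree : ∃ j, u j = v j
    · obtain ⟨j, hj⟩ := hagree
      have hu := insertNthHom_removeNth j u
      have hv := insertNthHom_removeNth j v
      rw [← hj] at hv
      have hd' : hammingDist (insertNthHom j (u j) (j.removeNth u))
          (insertNthHom j (u j) (j.removeNth v)) = _ :=
        hammingDist_insertNth j (u j) (u j) (j.removeNth u) (j.removeNth v)
      rw [hu, hv, if_pos rfl, add_zero] at hd'
      obtain ⟨p, hp, hl⟩ := ih.exists_isPath_insertNthHom_same j (u j)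
        (hammingDist_pos.mp (by omega) : j.removeNth u ≠ j.removeNth v) (m := m) (by omega) hm
        (by omega)
      exact ⟨p.copy hu hv, (isPath_copy _ _ _).mpr hp, by rw [length_copy, hl]⟩
    · have hflip := flipBelow_eq_of_forall_ne (not_exists.mp hagree)
      have hd' : hammingDist u v = n + 1 := hflip ▸ hammingDist_flipBelow u le_rfl
      have hv := (insertNthHom_last_flipBelow u).trans hflip
      obtain ⟨p, hp, hl⟩ := ih.exists_isPath_insertNthHom_flipBelow (Fin.last n)
        (Bool.not_ne_self _).symm hn ((Fin.last n).removeNth u) (m := m) (by omega) hm (by omega)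
      exact ⟨p.copy (insertNthHom_removeNth _ u) hv, (isPath_copy _ _ _).mpr hp,
        by rw [length_copy, hl]⟩

theorem skipRel_flipBelow {k : ℕ} (hk : 1 ≤ k) (hkn : k ≤ n) (u : Fin n → Bool) :
    skipRel n k u (flipBelow k u) :=
  ⟨hammingDist_pos.mp (by rw [hammingDist_flipBelow u hkn]; omega), fun i =>
    ⟨fun hi => by simp [flipBelow, hi], fun hi => by simp [flipBelow, Nat.not_lt.mpr hi]⟩⟩

theorem hypercube_le_enhanced (k : ℕ) : hypercube n ≤ enhanced n k :=
  fun _ _ => Or.inl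

theorem exists_isCycle_of_hypercube_le {G : SimpleGraph (Fin n → Bool)} (hle : hypercube n ≤ G)
    {u v : Fin n → Bool} (h : G.Adj u v) {l : ℕ} (hd : hammingDist u v < l) (h3 : 3 ≤ l)
    (hl : l ≤ 2 ^ n) (hpar : l % 2 = (hammingDist u v + 1) % 2) :
    ∃ c : G.Walk u u, c.IsCycle ∧ c.length = l := by
  rw [hammingDist_comm] at hd hpar
  obtain ⟨p, hp, hlen⟩ := bipanconnected n h.ne.symm (l - 1) (by omega) (by omega) (by omega)
  obtain ⟨c, hc, hcl⟩ := hp.exists_isCycle_cons hle h (by omega)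
  exact ⟨c, hc, by omega⟩

end Hypercube

open Hypercube in
theorem stmt18_general (n k : ℕ) (h1 : 1 ≤ k) (h2 : k ≤ n) :
    ∀ u : Fin n → Bool,
      (∀ l : ℕ, Even l → 4 ≤ l → l ≤ 2 ^ n →
        ∃ c : (enhanced n k).Walk u u, c.IsCycle ∧ c.length = l) ∧
      (Even k → ∀ l : ℕ, Odd l → k + 1 ≤ l → l ≤ 2 ^ n - 1 →
        ∃ c : (enhanced n k).Walk u u, c.IsCycle ∧ c.length = l) := by
  intro u
  refine ⟨fun l hl h4 hln => ?_, fun hk l hl hkl hln => ?_⟩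
  · have hl2 := Nat.even_iff.mp hl
    have hd := hammingDist_flipBelow u (show 1 ≤ n by omega)
    have hadj : (enhanced n k).Adj u (flipBelow 1 u) :=
      Or.inl (adj_iff_hammingDist_eq_one.mpr hd)
    exact exists_isCycle_of_hypercube_le (hypercube_le_enhanced k) hadj (by omega) (by omega) hln
      (by omega)
  · have hl2 := Nat.odd_iff.mp hl
    have hk2 := Nat.even_iff.mp hk
    have hd := hammingDist_flipBelow u h2
    have hadj : (enhanced n k).Adj u (flipBelow k u) := Or.inr (skipRel_flipBelow h1 h2 u)
    exact exists_isCycle_of_hypercube_le (hypercube_le_enhanced k) hadj (by omega) (by omega)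
      (by omega) (by omega)

/-- Every vertex of `Q_{n,k}` (`n ≥ 3`) lies on a cycle of every even length from
`4` to `2^n`; and if `k` is even, every vertex also lies on a cycle of every odd
length from `k + 1` to `2^n - 1`. -/
theorem stmt18 (n k : ℕ) (h1 : 1 ≤ k) (h2 : k ≤ n) (hn : 3 ≤ n) :
    ∀ u : Fin n → Bool,
      (∀ l : ℕ, Even l → 4 ≤ l → l ≤ 2 ^ n →
        ∃ c : (enhanced n k).Walk u u, c.IsCycle ∧ c.length = l) ∧
      (Even k → ∀ l : ℕ, Odd l → k + 1 ≤ l → l ≤ 2 ^ n - 1 →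
        ∃ c : (enhanced n k).Walk u u, c.IsCycle ∧ c.length = l) :=
  stmt18_general n k h1 h2
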